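/- arXiv:2512.10461 — 2 statements merged into one kernel-verified Lean document; each statement's English description precedes it below -/
import Mathlib

section
/- (Theorem 2, pathwise version for orthonormal null space basis.) Let A be a p × n real matrix, b ∈ ℝᵖ, C a q × n real matrix, d ∈ ℝ^q, y₀ ∈ ℝⁿ, and suppose F = {z : Az ≤ b and Cz = d} is nonempty. Let z_proj be the orthogonal projection of y₀ onto {z : Cz = d}, and let N : ℝʳ → ℝⁿ be a linear isometry whose range equals null(C). Suppose all rows of the transformed constraint matrix A∘N are nonzero, let 0 < δ < 2, and let w₀ = 0 with SKM iterates w_{j+1} = T_{ã_{i_j}, b̃_{i_j}, δ}(w_j) on the transformed system (A∘N) w ≤ b − A·z_proj (rows ã_iᵀ, right-hand side b̃ = b − A·z_proj), for any index sequence i₀, …, i_{k−1}, and suppose the transformed feasible set W = {w : (A∘N)w ≤ b̃} is nonempty. Then the recovered point z_k = z_proj + N w_k satisfies ‖z_k − y₀‖ ≤ √5 · infDist(y₀, F). -/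
/-!
The affine set `{z : Cz = d}` is `zproj + range N`, and `y₀ - zproj` is orthogonal to `range N`
because `zproj` is the nearest point of that set. A feasible `zs` corresponds to a point `ws` of the
transformed feasible set with `N ws = zs - zproj`, and each SKM step is Fejér monotone with respect
to it, so `‖w k - ws‖ ≤ ‖w 0 - ws‖ = ‖ws‖` and hence `‖w k‖ ≤ 2‖ws‖`. By Pythagoras,
`‖z_k - y₀‖² = ‖w k‖² + ‖y₀ - zproj‖² ≤ 4(‖zs - zproj‖² + ‖y₀ - zproj‖²) = 4‖zs - y₀‖²`, which is
even sharper than the factor `√5`.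
-/

open Matrix Metric

/-- The SKM update `T_{a,b,δ}(z) = z − δ·max(⟪a,z⟫ − b, 0)/‖a‖² • a`. -/
noncomputable def skmT {r : ℕ} (a : EuclideanSpace ℝ (Fin r)) (b δ : ℝ)
    (z : EuclideanSpace ℝ (Fin r)) : EuclideanSpace ℝ (Fin r) :=
  z - (δ * max ((inner ℝ a z : ℝ) - b) 0 / ‖a‖ ^ 2) • a

open scoped RealInnerProductSpace

section InnerProductSpace

variable {F : Type*} [NormedAddCommGroup F] [InnerProductSpace ℝ F]

theorem Submodule.real_inner_eq_zero_of_forall_norm_le_norm_sub (K : Submodule ℝ F) {u : F}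
    (h : ∀ w ∈ K, ‖u‖ ≤ ‖u - w‖) {w : F} (hw : w ∈ K) : ⟪u, w⟫ = 0 := by
  have hbdd : BddBelow (Set.range fun v : K => ‖u - v‖) :=
    ⟨0, Set.forall_mem_range.2 fun _ => norm_nonneg _⟩
  have hmin : ‖u - 0‖ = ⨅ v : K, ‖u - v‖ :=
    le_antisymm (le_ciInf fun v => by simpa using h v v.2) (ciInf_le hbdd ⟨0, K.zero_mem⟩)
  simpa using (norm_eq_iInf_iff_real_inner_eq_zero K K.zero_mem).1 hmin w hw

theorem norm_sub_le_two_mul_of_inner_eq_zero {e v s : F} (hv : ⟪v, e⟫ = 0)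
    (hs : ⟪s, e⟫ = 0) (hvs : ‖v‖ ≤ 2 * ‖s‖) : ‖v - e‖ ≤ 2 * ‖s - e‖ := by
  have hv' := norm_sub_sq_eq_norm_sq_add_norm_sq_real hv
  have hs' := norm_sub_sq_eq_norm_sq_add_norm_sq_real hs
  refine (sq_le_sq₀ (norm_nonneg _) (by positivity)).1 ?_
  nlinarith [norm_nonneg v, norm_nonneg e]

end InnerProductSpace

section SKM

variable {r : ℕ}

theorem skmT_zero_left (b δ : ℝ) (z : EuclideanSpace ℝ (Fin r)) : skmT 0 b δ z = z := by
  simp [skmT]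

theorem norm_skmT_sub_le {a x : EuclideanSpace ℝ (Fin r)} {b δ : ℝ} (hδ0 : 0 ≤ δ) (hδ2 : δ ≤ 2)
    (hx : ⟪a, x⟫ ≤ b) (z : EuclideanSpace ℝ (Fin r)) : ‖skmT a b δ z - x‖ ≤ ‖z - x‖ := by
  rcases eq_or_ne a 0 with rfl | ha
  · rw [skmT_zero_left]
  set m := max (⟪a, z⟫ - b) 0
  set t := δ * m / ‖a‖ ^ 2
  have ha2 : 0 < ‖a‖ ^ 2 := by positivity
  have hm : 0 ≤ m := le_max_right _ _
  have ht : 0 ≤ t := by positivity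
  have hta : t * ‖a‖ ^ 2 = δ * m := div_mul_cancel₀ _ ha2.ne'
  have hgap : t * m ≤ t * ⟪a, z - x⟫ := by
    rcases le_total (⟪a, z⟫ - b) 0 with h | h
    · simp [t, m, max_eq_right h]
    · refine mul_le_mul_of_nonneg_left ?_ ht
      rw [inner_sub_right, show m = ⟪a, z⟫ - b from max_eq_left h]
      linarith
  have hsq : ‖skmT a b δ z - x‖ ^ 2 ≤ ‖z - x‖ ^ 2 := by
    have hexp : ‖skmT a b δ z - x‖ ^ 2 = ‖z - x‖ ^ 2 - 2 * t * ⟪a, z - x⟫ + t * (δ * m) := by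
      rw [show skmT a b δ z - x = (z - x) - t • a by simp only [skmT, t, m]; abel,
        norm_sub_sq_real, real_inner_smul_right, real_inner_comm, norm_smul, mul_pow,
        Real.norm_eq_abs, sq_abs, ← hta]
      ring
    nlinarith [mul_nonneg (sub_nonneg.2 hδ2) (mul_nonneg ht hm)]
  exact (sq_le_sq₀ (norm_nonneg _) (norm_nonneg _)).1 hsq

variable {p k : ℕ} {a : Fin p → EuclideanSpace ℝ (Fin r)} {b : Fin p → ℝ} {δ : ℝ}
  {idx : ℕ → Fin p} {w : ℕ → EuclideanSpace ℝ (Fin r)} {x : EuclideanSpace ℝ (Fin r)}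

theorem norm_skm_iterate_sub_le (hδ0 : 0 ≤ δ) (hδ2 : δ ≤ 2)
    (hstep : ∀ j < k, w (j + 1) = skmT (a (idx j)) (b (idx j)) δ (w j))
    (hx : ∀ i, ⟪a i, x⟫ ≤ b i) : ‖w k - x‖ ≤ ‖w 0 - x‖ := by
  induction k with
  | zero => rfl
  | succ k ih =>
    rw [hstep k k.lt_succ_self]
    exact (norm_skmT_sub_le hδ0 hδ2 (hx _) _).trans
      (ih fun j hj => hstep j (hj.trans k.lt_succ_self))

theorem norm_skm_iterate_le_two_mul (hδ0 : 0 ≤ δ) (hδ2 : δ ≤ 2) (hw0 : w 0 = 0)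
    (hstep : ∀ j < k, w (j + 1) = skmT (a (idx j)) (b (idx j)) δ (w j))
    (hx : ∀ i, ⟪a i, x⟫ ≤ b i) : ‖w k‖ ≤ 2 * ‖x‖ := by
  have := norm_skm_iterate_sub_le hδ0 hδ2 hstep hx
  rw [hw0, zero_sub, norm_neg] at this
  linarith [norm_le_norm_add_norm_sub' (w k) x]

end SKM

theorem tskm_pathwise_sqrt5_bound_general
    (p q n r k : ℕ) (A : Matrix (Fin p) (Fin n) ℝ) (b : Fin p → ℝ)
    (C : Matrix (Fin q) (Fin n) ℝ) (d : Fin q → ℝ)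
    (y₀ : EuclideanSpace ℝ (Fin n))
    (F : Set (EuclideanSpace ℝ (Fin n)))
    (hF : F = {z : EuclideanSpace ℝ (Fin n) | (∀ i, A.mulVec z i ≤ b i) ∧ C.mulVec z = d})
    (hFne : F.Nonempty)
    (zproj : EuclideanSpace ℝ (Fin n)) (hzproj_mem : C.mulVec zproj = d)
    (hzproj_min : ∀ z : EuclideanSpace ℝ (Fin n), C.mulVec z = d →
      ‖y₀ - zproj‖ ≤ ‖y₀ - z‖)
    (N : EuclideanSpace ℝ (Fin r) →ₗᵢ[ℝ] EuclideanSpace ℝ (Fin n))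
    (hN : Set.range N = {v : EuclideanSpace ℝ (Fin n) | C.mulVec v = 0})
    -- rows of the transformed constraint matrix `A∘N`
    (atil : Fin p → EuclideanSpace ℝ (Fin r))
    (hatil : ∀ i w, (inner ℝ (atil i) w : ℝ) = A.mulVec (N w) i)
    (btil : Fin p → ℝ) (hbtil : ∀ i, btil i = b i - A.mulVec zproj i)
    (δ : ℝ) (hδ0 : 0 < δ) (hδ2 : δ < 2)
    (idx : ℕ → Fin p)
    (w : ℕ → EuclideanSpace ℝ (Fin r)) (hw0 : w 0 = 0)
    (hstep : ∀ j < k, w (j + 1) = skmT (atil (idx j)) (btil (idx j)) δ (w j)) :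
    ‖(zproj + N (w k)) - y₀‖ ≤ Real.sqrt 5 * infDist y₀ F := by
  have horth : ∀ u, ⟪N u, y₀ - zproj⟫ = 0 := fun u => by
    rw [real_inner_comm]
    refine (LinearMap.range N.toLinearMap).real_inner_eq_zero_of_forall_norm_le_norm_sub
      (fun v hv => ?_) ⟨u, rfl⟩
    rw [sub_sub]
    have hCv : C.mulVec v = 0 := (Set.ext_iff.1 hN v).1 hv
    exact hzproj_min _ (by rw [WithLp.ofLp_add, mulVec_add, hzproj_mem, hCv, add_zero])
  have hbound : ∀ zs ∈ F, ‖(zproj + N (w k)) - y₀‖ ≤ 2 * dist y₀ zs := by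
    intro zs hzs
    obtain ⟨hzsA, hzsC⟩ := hF ▸ hzs
    obtain ⟨ws, hws⟩ : zs - zproj ∈ Set.range N := by
      rw [hN]; simp [mulVec_sub, hzsC, hzproj_mem]
    have hwsW : ∀ i, ⟪atil i, ws⟫ ≤ btil i := fun i => by
      rw [hatil, hws, hbtil, WithLp.ofLp_sub, mulVec_sub, Pi.sub_apply]
      linarith [hzsA i]
    calc ‖(zproj + N (w k)) - y₀‖ = ‖N (w k) - (y₀ - zproj)‖ := by congr 1; abel
      _ ≤ 2 * ‖N ws - (y₀ - zproj)‖ :=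
        norm_sub_le_two_mul_of_inner_eq_zero (horth (w k)) (horth ws)
          (by simpa using norm_skm_iterate_le_two_mul hδ0.le hδ2.le hw0 hstep hwsW)
      _ = 2 * dist y₀ zs := by rw [hws, sub_sub_sub_cancel_right, dist_comm, dist_eq_norm]
  calc ‖(zproj + N (w k)) - y₀‖ ≤ 2 * infDist y₀ F := by
        have := (le_infDist hFne).2 fun zs hzs => (div_le_iff₀' two_pos).2 (hbound zs hzs)
        linarith
    _ ≤ √5 * infDist y₀ F :=
        mul_le_mul_of_nonneg_right (Real.le_sqrt_of_sq_le (by norm_num)) infDist_nonneg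

/-- Theorem 2, pathwise version (orthonormal null-space basis): running SKM on
the transformed system `(A∘N) w ≤ b − A·z_proj` from `w₀ = 0` and recovering
`z_k = z_proj + N w_k` yields `‖z_k − y₀‖ ≤ √5 · infDist(y₀, F)`. -/
theorem tskm_pathwise_sqrt5_bound
    (p q n r k : ℕ) (A : Matrix (Fin p) (Fin n) ℝ) (b : Fin p → ℝ)
    (C : Matrix (Fin q) (Fin n) ℝ) (d : Fin q → ℝ)
    (y₀ : EuclideanSpace ℝ (Fin n))
    (F : Set (EuclideanSpace ℝ (Fin n)))
    (hF : F = {z : EuclideanSpace ℝ (Fin n) | (∀ i, A.mulVec z i ≤ b i) ∧ C.mulVec z = d})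
    (hFne : F.Nonempty)
    (zproj : EuclideanSpace ℝ (Fin n)) (hzproj_mem : C.mulVec zproj = d)
    (hzproj_min : ∀ z : EuclideanSpace ℝ (Fin n), C.mulVec z = d →
      ‖y₀ - zproj‖ ≤ ‖y₀ - z‖)
    (N : EuclideanSpace ℝ (Fin r) →ₗᵢ[ℝ] EuclideanSpace ℝ (Fin n))
    (hN : Set.range N = {v : EuclideanSpace ℝ (Fin n) | C.mulVec v = 0})
    -- rows of the transformed constraint matrix `A∘N`
    (atil : Fin p → EuclideanSpace ℝ (Fin r))
    (hatil : ∀ i w, (inner ℝ (atil i) w : ℝ) = A.mulVec (N w) i)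
    (hatil_ne : ∀ i, atil i ≠ 0)
    (btil : Fin p → ℝ) (hbtil : ∀ i, btil i = b i - A.mulVec zproj i)
    (hWne : {w : EuclideanSpace ℝ (Fin r) | ∀ i, (inner ℝ (atil i) w : ℝ) ≤ btil i}.Nonempty)
    (δ : ℝ) (hδ0 : 0 < δ) (hδ2 : δ < 2)
    (idx : ℕ → Fin p)
    (w : ℕ → EuclideanSpace ℝ (Fin r)) (hw0 : w 0 = 0)
    (hstep : ∀ j < k, w (j + 1) = skmT (atil (idx j)) (btil (idx j)) δ (w j)) :
    ‖(zproj + N (w k)) - y₀‖ ≤ Real.sqrt 5 * infDist y₀ F :=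
  tskm_pathwise_sqrt5_bound_general p q n r k A b C d y₀ F hF hFne zproj hzproj_mem hzproj_min N hN
    atil hatil btil hbtil δ hδ0 hδ2 idx w hw0 hstep
end

section
/- (Theorem 2, pathwise version with general condition number.) Let A be a p × n real matrix, b ∈ ℝᵖ, C a q × n real matrix, d ∈ ℝ^q, y₀ ∈ ℝⁿ, and suppose F = {z : Az ≤ b and Cz = d} is nonempty. Let z_proj be the orthogonal projection of y₀ onto {z : Cz = d}. Let N : ℝʳ → ℝⁿ be a linear map with range equal to null(C) and constants 0 < σ₂ ≤ σ₁ such that σ₂‖w‖ ≤ ‖Nw‖ ≤ σ₁‖w‖ for all w ∈ ℝʳ, and set κ = σ₁/σ₂. Suppose all rows of A∘N are nonzero, 0 < δ < 2, the transformed feasible set W = {w : (A∘N)w ≤ b − A·z_proj} is nonempty, and let w_k be the k-th SKM iterate from w₀ = 0 on the system (A∘N)w ≤ b − A·z_proj along any index sequence. Then ‖(z_proj + N w_k) − y₀‖ ≤ √(1 + 4κ²) · infDist(y₀, F). -/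
open Matrix Metric

open scoped InnerProductSpace

/-!
Every point `x` of the feasible set of the transformed system satisfies all its constraints, so
each SKM step is nonexpansive towards `x` and the iterate started at `0` stays in the ball of
radius `‖x‖` around `x`; in particular `‖w_k‖ ≤ 2‖x‖`. Given `z ∈ F`, the point `x` with
`N x = z − z_proj` is such a point, hence `‖N w_k‖ ≤ 2σ₁‖x‖ ≤ 2κ‖z − z_proj‖`. Since
`y₀ − z_proj ⟂ null(C)`, Pythagoras gives `‖y₀ − z‖² = ‖y₀ − z_proj‖² + ‖z − z_proj‖²`, and
Cauchy–Schwarz in `ℝ²` bounds `‖y₀ − z_proj‖ + 2κ‖z − z_proj‖` by `√(1 + 4κ²)‖y₀ − z‖`.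
-/

section InnerProductSpace

variable {E : Type*} [NormedAddCommGroup E] [InnerProductSpace ℝ E]

theorem norm_sub_relaxedHalfspaceStep_sub_le (a : E) {b δ : ℝ} (hδ0 : 0 ≤ δ) (hδ2 : δ ≤ 2)
    {x : E} (hx : ⟪a, x⟫_ℝ ≤ b) (z : E) :
    ‖z - (δ * max (⟪a, z⟫_ℝ - b) 0 / ‖a‖ ^ 2) • a - x‖ ≤ ‖z - x‖ := by
  rcases eq_or_ne a 0 with rfl | ha
  · simp
  have ha2 : 0 < ‖a‖ ^ 2 := by positivity
  set m := max (⟪a, z⟫_ℝ - b) 0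
  have hm0 : 0 ≤ m := le_max_right _ _
  -- `m ≤ ⟪a, z - x⟫` whenever `m ≠ 0`, because `⟪a, x⟫ ≤ b`
  have hm : m * m ≤ m * ⟪a, z - x⟫_ℝ := by
    rcases le_total (⟪a, z⟫_ℝ - b) 0 with h | h
    · simp [m, max_eq_right h]
    · rw [inner_sub_right]
      exact mul_le_mul_of_nonneg_left (by simp only [m, max_eq_left h]; linarith) hm0
  have hexpand : ‖z - x - (δ * m / ‖a‖ ^ 2) • a‖ ^ 2
      = ‖z - x‖ ^ 2 - (2 * δ * (m * ⟪a, z - x⟫_ℝ) - δ ^ 2 * m ^ 2) / ‖a‖ ^ 2 := by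
    rw [norm_sub_sq_real, real_inner_smul_right, norm_smul, real_inner_comm, mul_pow,
      Real.norm_eq_abs, sq_abs]
    field_simp
    ring
  have hdecrease : 0 ≤ 2 * δ * (m * ⟪a, z - x⟫_ℝ) - δ ^ 2 * m ^ 2 := by
    nlinarith [mul_nonneg (mul_nonneg hδ0 (sub_nonneg.2 hδ2)) (sq_nonneg m)]
  rw [sub_right_comm]
  refine pow_le_pow_iff_left₀ (norm_nonneg _) (norm_nonneg _) two_ne_zero |>.1 ?_
  rw [hexpand]
  linarith [div_nonneg hdecrease ha2.le]

theorem real_inner_eq_zero_of_forall_norm_le_norm_sub (K : Submodule ℝ E) {u : E}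
    (h : ∀ v ∈ K, ‖u‖ ≤ ‖u - v‖) : ∀ v ∈ K, ⟪u, v⟫_ℝ = 0 := by
  have hinf : ‖u - 0‖ = ⨅ v : (K : Set E), ‖u - v‖ := by
    refine le_antisymm (le_ciInf fun v ↦ by simpa using h v v.2) ?_
    have := ciInf_le ⟨(0 : ℝ), by rintro _ ⟨v, rfl⟩; exact norm_nonneg (u - v)⟩
      (⟨0, K.zero_mem⟩ : (K : Set E))
    simpa using this
  simpa using (K.norm_eq_iInf_iff_real_inner_eq_zero K.zero_mem).1 hinf

/-- Pythagoras followed by Cauchy–Schwarz in `ℝ²`. -/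
theorem norm_add_mul_norm_le_sqrt_mul_norm_sub {u v : E} (huv : ⟪u, v⟫_ℝ = 0) (c : ℝ) :
    ‖u‖ + c * ‖v‖ ≤ √(1 + c ^ 2) * ‖u - v‖ := by
  have hpyth : ‖u - v‖ ^ 2 = ‖u‖ ^ 2 + ‖v‖ ^ 2 := by
    simpa only [sq] using norm_sub_sq_eq_norm_sq_add_norm_sq_real huv
  rw [← Real.sqrt_sq (norm_nonneg (u - v)), ← Real.sqrt_mul (by positivity), hpyth]
  exact (le_abs_self _).trans <| Real.abs_le_sqrt <| by nlinarith [sq_nonneg (c * ‖u‖ - ‖v‖)]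

end InnerProductSpace

theorem real_inner_sub_eq_zero_of_mulVec_eq_zero {q n : ℕ} {C : Matrix (Fin q) (Fin n) ℝ}
    {d : Fin q → ℝ} {y z₀ : EuclideanSpace ℝ (Fin n)} (hz₀ : C *ᵥ z₀ = d)
    (hmin : ∀ z : EuclideanSpace ℝ (Fin n), C *ᵥ z = d → ‖y - z₀‖ ≤ ‖y - z‖)
    {v : EuclideanSpace ℝ (Fin n)} (hv : C *ᵥ v = 0) : ⟪y - z₀, v⟫_ℝ = 0 := by
  refine real_inner_eq_zero_of_forall_norm_le_norm_sub (ℝ ∙ v) (fun u hu ↦ ?_) v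
    (Submodule.mem_span_singleton_self v)
  obtain ⟨t, rfl⟩ := Submodule.mem_span_singleton.1 hu
  simpa [sub_sub] using hmin (z₀ + t • v) (by simp [mulVec_add, mulVec_smul, hz₀, hv])

theorem norm_skm_iterate_le {p r k : ℕ} {a : Fin p → EuclideanSpace ℝ (Fin r)} {b : Fin p → ℝ}
    {δ : ℝ} (hδ0 : 0 ≤ δ) (hδ2 : δ ≤ 2) (idx : ℕ → Fin p) {w : ℕ → EuclideanSpace ℝ (Fin r)}
    (hw0 : w 0 = 0) (hstep : ∀ j < k, w (j + 1) = skmT (a (idx j)) (b (idx j)) δ (w j))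
    {x : EuclideanSpace ℝ (Fin r)} (hx : ∀ i, ⟪a i, x⟫_ℝ ≤ b i) :
    ‖w k‖ ≤ 2 * ‖x‖ := by
  have hfejer : ∀ j ≤ k, ‖w j - x‖ ≤ ‖x‖ := by
    intro j hj
    induction j with
    | zero => simp [hw0]
    | succ j ih =>
      rw [hstep j hj]
      exact (norm_sub_relaxedHalfspaceStep_sub_le _ hδ0 hδ2 (hx _) _).trans
        (ih (Nat.le_of_succ_le hj))
  calc ‖w k‖ ≤ ‖w k - x‖ + ‖x‖ := norm_le_norm_sub_add _ _
    _ ≤ 2 * ‖x‖ := by linarith [hfejer k le_rfl]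

theorem tskm_pathwise_condition_number_bound_general
    (p q n r k : ℕ) (A : Matrix (Fin p) (Fin n) ℝ) (b : Fin p → ℝ)
    (C : Matrix (Fin q) (Fin n) ℝ) (d : Fin q → ℝ)
    (y₀ : EuclideanSpace ℝ (Fin n))
    (F : Set (EuclideanSpace ℝ (Fin n)))
    (hF : F = {z : EuclideanSpace ℝ (Fin n) | (∀ i, A.mulVec z i ≤ b i) ∧ C.mulVec z = d})
    (hFne : F.Nonempty)
    (zproj : EuclideanSpace ℝ (Fin n)) (hzproj_mem : C.mulVec zproj = d)
    (hzproj_min : ∀ z : EuclideanSpace ℝ (Fin n), C.mulVec z = d →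
      ‖y₀ - zproj‖ ≤ ‖y₀ - z‖)
    (N : EuclideanSpace ℝ (Fin r) →ₗ[ℝ] EuclideanSpace ℝ (Fin n))
    (hN : Set.range N = {v : EuclideanSpace ℝ (Fin n) | C.mulVec v = 0})
    (σ₁ σ₂ : ℝ) (hσ₂ : 0 < σ₂) (hσ : σ₂ ≤ σ₁)
    (hNlow : ∀ w, σ₂ * ‖w‖ ≤ ‖N w‖) (hNup : ∀ w, ‖N w‖ ≤ σ₁ * ‖w‖)
    (κ : ℝ) (hκ : κ = σ₁ / σ₂)
    -- rows of the transformed constraint matrix `A∘N`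
    (atil : Fin p → EuclideanSpace ℝ (Fin r))
    (hatil : ∀ i w, (inner ℝ (atil i) w : ℝ) = A.mulVec (N w) i)
    (btil : Fin p → ℝ) (hbtil : ∀ i, btil i = b i - A.mulVec zproj i)
    (δ : ℝ) (hδ0 : 0 < δ) (hδ2 : δ < 2)
    (idx : ℕ → Fin p)
    (w : ℕ → EuclideanSpace ℝ (Fin r)) (hw0 : w 0 = 0)
    (hstep : ∀ j < k, w (j + 1) = skmT (atil (idx j)) (btil (idx j)) δ (w j)) :
    ‖(zproj + N (w k)) - y₀‖ ≤ Real.sqrt (1 + 4 * κ ^ 2) * infDist y₀ F := by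
  have hσ₁ : σ₁ = κ * σ₂ := by rw [hκ, div_mul_cancel₀ _ hσ₂.ne']
  have hσ₁0 : 0 ≤ σ₁ := hσ₂.le.trans hσ
  have hκ0 : 0 ≤ κ := hκ ▸ div_nonneg hσ₁0 hσ₂.le
  subst hF
  rw [mul_comm, ← div_le_iff₀ (by positivity), le_infDist hFne]
  rintro z ⟨hzA, hzC⟩
  obtain ⟨x, hx⟩ : z - zproj ∈ Set.range N := by
    rw [hN]; simp [mulVec_sub, hzC, hzproj_mem]
  have hxW : ∀ i, ⟪atil i, x⟫_ℝ ≤ btil i := fun i ↦ by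
    simpa [hatil, hx, hbtil, mulVec_sub] using hzA i
  have hNwk : ‖N (w k)‖ ≤ 2 * κ * ‖z - zproj‖ :=
    calc ‖N (w k)‖ ≤ σ₁ * (2 * ‖x‖) :=
          (hNup _).trans (by gcongr; exact norm_skm_iterate_le hδ0.le hδ2.le idx hw0 hstep hxW)
      _ = 2 * κ * (σ₂ * ‖x‖) := by rw [hσ₁]; ring
      _ ≤ 2 * κ * ‖z - zproj‖ := by rw [← hx]; gcongr; exact hNlow x
  have horth : ⟪y₀ - zproj, z - zproj⟫_ℝ = 0 :=
    real_inner_sub_eq_zero_of_mulVec_eq_zero hzproj_mem hzproj_min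
      (by simp [mulVec_sub, hzC, hzproj_mem])
  rw [div_le_iff₀' (by positivity), dist_eq_norm, ← sub_sub_sub_cancel_right y₀ z zproj]
  calc ‖zproj + N (w k) - y₀‖ ≤ ‖y₀ - zproj‖ + 2 * κ * ‖z - zproj‖ := by
        rw [add_sub_right_comm, ← neg_sub y₀ zproj]
        exact (norm_add_le _ _).trans (by rw [norm_neg]; gcongr)
    _ ≤ √(1 + 4 * κ ^ 2) * ‖y₀ - zproj - (z - zproj)‖ := by
        convert norm_add_mul_norm_le_sqrt_mul_norm_sub horth (2 * κ) using 4
        ring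

/-- Theorem 2, pathwise version with general condition number: if
`σ₂‖w‖ ≤ ‖Nw‖ ≤ σ₁‖w‖` and `κ = σ₁/σ₂`, then the recovered point
`z_proj + N w_k` satisfies `‖(z_proj + N w_k) − y₀‖ ≤ √(1 + 4κ²)·infDist(y₀, F)`. -/
theorem tskm_pathwise_condition_number_bound
    (p q n r k : ℕ) (A : Matrix (Fin p) (Fin n) ℝ) (b : Fin p → ℝ)
    (C : Matrix (Fin q) (Fin n) ℝ) (d : Fin q → ℝ)
    (y₀ : EuclideanSpace ℝ (Fin n))
    (F : Set (EuclideanSpace ℝ (Fin n)))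
    (hF : F = {z : EuclideanSpace ℝ (Fin n) | (∀ i, A.mulVec z i ≤ b i) ∧ C.mulVec z = d})
    (hFne : F.Nonempty)
    (zproj : EuclideanSpace ℝ (Fin n)) (hzproj_mem : C.mulVec zproj = d)
    (hzproj_min : ∀ z : EuclideanSpace ℝ (Fin n), C.mulVec z = d →
      ‖y₀ - zproj‖ ≤ ‖y₀ - z‖)
    (N : EuclideanSpace ℝ (Fin r) →ₗ[ℝ] EuclideanSpace ℝ (Fin n))
    (hN : Set.range N = {v : EuclideanSpace ℝ (Fin n) | C.mulVec v = 0})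
    (σ₁ σ₂ : ℝ) (hσ₂ : 0 < σ₂) (hσ : σ₂ ≤ σ₁)
    (hNlow : ∀ w, σ₂ * ‖w‖ ≤ ‖N w‖) (hNup : ∀ w, ‖N w‖ ≤ σ₁ * ‖w‖)
    (κ : ℝ) (hκ : κ = σ₁ / σ₂)
    -- rows of the transformed constraint matrix `A∘N`
    (atil : Fin p → EuclideanSpace ℝ (Fin r))
    (hatil : ∀ i w, (inner ℝ (atil i) w : ℝ) = A.mulVec (N w) i)
    (hatil_ne : ∀ i, atil i ≠ 0)
    (btil : Fin p → ℝ) (hbtil : ∀ i, btil i = b i - A.mulVec zproj i)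
    (hWne : {w : EuclideanSpace ℝ (Fin r) | ∀ i, (inner ℝ (atil i) w : ℝ) ≤ btil i}.Nonempty)
    (δ : ℝ) (hδ0 : 0 < δ) (hδ2 : δ < 2)
    (idx : ℕ → Fin p)
    (w : ℕ → EuclideanSpace ℝ (Fin r)) (hw0 : w 0 = 0)
    (hstep : ∀ j < k, w (j + 1) = skmT (atil (idx j)) (btil (idx j)) δ (w j)) :
    ‖(zproj + N (w k)) - y₀‖ ≤ Real.sqrt (1 + 4 * κ ^ 2) * infDist y₀ F :=
  tskm_pathwise_condition_number_bound_general p q n r k A b C d y₀ F hF hFne zproj hzproj_mem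
    hzproj_min N hN σ₁ σ₂ hσ₂ hσ hNlow hNup κ hκ atil hatil btil hbtil δ hδ0 hδ2 idx w hw0 hstep
end
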